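/- Let G be a congestion game with N players and nonnegative cost functions f_e, let λ > 0, and let f'_e : ℕ → ℝ be nondecreasing modified cost functions such that for every resource e and all integers 0 ≤ n, m ≤ N: λ·m·f_e(m) ≥ m·f'_e(n+1) − n·f'_e(n) + n·f_e(n). If s is a pure Nash equilibrium of the game played with the modified costs, i.e., c'_u(s) ≤ c'_u(s'_u, s_{-u}) for every player u and every s'_u ∈ S_u, then for every strategy profile s* the social cost with respect to the original costs satisfies Σ_{e∈E} n_e(s)·f_e(n_e(s)) ≤ λ·Σ_{e∈E} n_e(s*)·f_e(n_e(s*)). (This is the paper's guarantee that the price of anarchy under the refundable load dependent taxes t_e(n) = f'_e(n) − f_e(n) computed by the linear program LP_SC is at most λ, equivalently that every local optimum of the pseudo-potential ζ_SC(s) = Σ_{e∈E} Σ_{i=1}^{n_e(s)} f'_e(i) approximates the minimum social cost within factor λ.) -/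
import Mathlib


open Finset

/-- The number of players using resource `e` in the profile `s`. -/
def congLoad {ι E : Type*} [Fintype ι] [DecidableEq E] (s : ι → Finset E) (e : E) : ℕ :=
  (Finset.univ.filter fun u => e ∈ s u).card

/-- The cost of player `u` in profile `s` with resource cost functions `f`. -/
def congCost {ι E : Type*} [Fintype ι] [DecidableEq E]
    (f : E → ℕ → ℝ) (s : ι → Finset E) (u : ι) : ℝ :=
  ∑ e ∈ s u, f e (congLoad s e)

lemma congLoad_le_card {ι E : Type*} [Fintype ι] [DecidableEq E]
    (s : ι → Finset E) (e : E) : congLoad s e ≤ Fintype.card ι := by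
  classical
  exact (Finset.card_filter_le _ _).trans_eq rfl

lemma congLoad_update_le {ι E : Type*} [Fintype ι] [DecidableEq ι] [DecidableEq E]
    (s : ι → Finset E) (u : ι) (t : Finset E) (e : E) :
    congLoad (Function.update s u t) e ≤ congLoad s e + 1 := by
  classical
  unfold congLoad
  calc (Finset.univ.filter fun v => e ∈ Function.update s u t v).card
      ≤ (insert u (Finset.univ.filter fun v => e ∈ s v)).card := by
        apply Finset.card_le_card
        intro v hv
        simp only [Finset.mem_filter, Finset.mem_univ, true_and] at hv
        by_cases hvu : v = u
        · exact Finset.mem_insert.2 (Or.inl hvu)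
        · rw [Function.update_of_ne hvu] at hv
          exact Finset.mem_insert.2 (Or.inr (by simp [hv]))
    _ ≤ _ := Finset.card_insert_le _ _

lemma sum_over_players {ι E : Type*} [Fintype ι] [Fintype E] [DecidableEq E]
    (s : ι → Finset E) (g : E → ℝ) :
    ∑ u : ι, ∑ e ∈ s u, g e = ∑ e : E, (congLoad s e : ℝ) * g e := by
  classical
  calc ∑ u : ι, ∑ e ∈ s u, g e
      = ∑ u : ι, ∑ e : E, if e ∈ s u then g e else 0 := by
        refine Finset.sum_congr rfl fun u _ => ?_
        rw [Finset.sum_ite_mem, Finset.univ_inter]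
    _ = ∑ e : E, ∑ u : ι, if e ∈ s u then g e else 0 := Finset.sum_comm
    _ = ∑ e : E, (congLoad s e : ℝ) * g e := by
        refine Finset.sum_congr rfl fun e _ => ?_
        rw [congLoad, ← Finset.sum_filter, Finset.sum_const, nsmul_eq_mul]

/-- **price of anarchy under universal taxes.** If the modified (taxed) cost
functions `f'` satisfy the per-resource smoothness condition
`lam * m * f_e(m) ≥ m * f'_e(n+1) - n * f'_e(n) + n * f_e(n)` for all `0 ≤ n, m ≤ N`, then
every pure Nash equilibrium `s` of the game played with the modified costs has social cost,
with respect to the original costs, at most `lam` times that of any profile `s*`. -/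
theorem poa_under_taxes
    {ι E : Type*} [Fintype ι] [DecidableEq ι] [Fintype E] [DecidableEq E]
    (Strat : ι → Finset (Finset E)) (hStrat : ∀ u, (Strat u).Nonempty)
    (f f' : E → ℕ → ℝ)
    (hfnonneg : ∀ e n, 0 ≤ f e n)
    (hf'mono : ∀ e, Monotone (f' e))
    (lam : ℝ) (hlam : 0 < lam)
    (hsmooth : ∀ e, ∀ n m : ℕ, n ≤ Fintype.card ι → m ≤ Fintype.card ι →
      lam * ((m : ℝ) * f e m) ≥
        (m : ℝ) * f' e (n + 1) - (n : ℝ) * f' e n + (n : ℝ) * f e n)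
    (s : ι → Finset E) (hs : ∀ u, s u ∈ Strat u)
    (hNash : ∀ (u : ι), ∀ s'u ∈ Strat u,
      congCost f' s u ≤ congCost f' (Function.update s u s'u) u)
    (sstar : ι → Finset E) (hsstar : ∀ u, sstar u ∈ Strat u) :
    ∑ e, (congLoad s e : ℝ) * f e (congLoad s e) ≤
      lam * ∑ e, (congLoad sstar e : ℝ) * f e (congLoad sstar e) := by
  classical
  -- Key inequality from Nash: ∑_e n_e f'_e(n_e) ≤ ∑_e m_e f'_e(n_e + 1)
  have hkey : ∑ e : E, (congLoad s e : ℝ) * f' e (congLoad s e) ≤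
      ∑ e : E, (congLoad sstar e : ℝ) * f' e (congLoad s e + 1) := by
    rw [← sum_over_players s (fun e => f' e (congLoad s e)),
        ← sum_over_players sstar (fun e => f' e (congLoad s e + 1))]
    apply Finset.sum_le_sum
    intro u _
    calc ∑ e ∈ s u, f' e (congLoad s e)
        = congCost f' s u := rfl
      _ ≤ congCost f' (Function.update s u (sstar u)) u := hNash u (sstar u) (hsstar u)
      _ ≤ ∑ e ∈ sstar u, f' e (congLoad s e + 1) := by
          unfold congCost
          rw [Function.update_self]
          apply Finset.sum_le_sum
          intro e _
          exact hf'mono e (congLoad_update_le s u (sstar u) e)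
  -- Combine with smoothness, resource by resource.
  have hfinal : ∑ e : E, (congLoad s e : ℝ) * f e (congLoad s e) ≤
      (∑ e : E, (congLoad s e : ℝ) * f e (congLoad s e))
      - (∑ e : E, (congLoad s e : ℝ) * f' e (congLoad s e))
      + (∑ e : E, (congLoad sstar e : ℝ) * f' e (congLoad s e + 1)) := by
    linarith
  have hsm : (∑ e : E, (congLoad s e : ℝ) * f e (congLoad s e))
      - (∑ e : E, (congLoad s e : ℝ) * f' e (congLoad s e))
      + (∑ e : E, (congLoad sstar e : ℝ) * f' e (congLoad s e + 1)) ≤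
      ∑ e : E, lam * ((congLoad sstar e : ℝ) * f e (congLoad sstar e)) := by
    rw [← Finset.sum_sub_distrib, ← Finset.sum_add_distrib]
    apply Finset.sum_le_sum
    intro e _
    have := hsmooth e (congLoad s e) (congLoad sstar e)
      (congLoad_le_card s e) (congLoad_le_card sstar e)
    linarith
  rw [← Finset.mul_sum] at *
  linarith
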